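/- arXiv:1007.4469 — 7 statements merged into one kernel-verified Lean document; each statement's English description precedes it below -/
import Mathlib

section
/- Let A be a commutative superalgebra, and let q_{ij} ∈ A₀ (1 ≤ i < j ≤ 4), λ_k ∈ A₁ (1 ≤ k ≤ 4), a₅₅ ∈ A₀ be defined from even elements r_i, s_i ∈ A₀ and odd elements ξ, θ ∈ A₁ by q_{ij} = r_i s_j − r_j s_i, λ_i = θ r_i − ξ s_i, a₅₅ = ξθ. Then the super Plücker relations hold: (1) q₁₂q₃₄ − q₁₃q₂₄ + q₁₄q₂₃ = 0; (2) q_{ij}λ_k − q_{ik}λ_j + q_{jk}λ_i = 0 for all i < j < k; (3) λ_i λ_j = a₅₅ q_{ij} for all i < j; (4) λ_i a₅₅ = 0 for all i. -/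
/-- In a commutative superalgebra A (even elements r_i, s_i central,
odd elements ξ, θ anticommuting with each other and of square zero), the elements
q_{ij} = r_i s_j − r_j s_i, λ_i = θ r_i − ξ s_i, a₅₅ = ξθ satisfy the super
Plücker relations. -/
theorem super_plucker_relations {A : Type} [Ring A] [Algebra ℂ A]
    (r s : Fin 4 → A) (ξ θ : A)
    (hr : ∀ i x, Commute (r i) x) (hs : ∀ i x, Commute (s i) x)
    (hξθ : ξ * θ = -(θ * ξ)) (hξ : ξ * ξ = 0) (hθ : θ * θ = 0)
    (q : Fin 4 → Fin 4 → A) (lam : Fin 4 → A) (a55 : A)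
    (hq : ∀ i j, q i j = r i * s j - r j * s i)
    (hlam : ∀ i, lam i = θ * r i - ξ * s i)
    (ha : a55 = ξ * θ) :
    (q 0 1 * q 2 3 - q 0 2 * q 1 3 + q 0 3 * q 1 2 = 0) ∧
    (∀ i j k : Fin 4, i < j → j < k →
        q i j * lam k - q i k * lam j + q j k * lam i = 0) ∧
    (∀ i j : Fin 4, i < j → lam i * lam j = a55 * q i j) ∧
    (∀ i : Fin 4, lam i * a55 = 0) := by
  -- r i and s i are central
  have hrC : ∀ i, r i ∈ Subring.center A := fun i =>
    Subring.mem_center_iff.mpr fun g => ((hr i g).eq).symm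
  have hsC : ∀ i, s i ∈ Subring.center A := fun i =>
    Subring.mem_center_iff.mpr fun g => ((hs i g).eq).symm
  -- q i j is central
  have hqC : ∀ i j x, Commute (q i j) x := fun i j x => by
    rw [hq]; exact ((hr i x).mul_left (hs j x)).sub_left ((hr j x).mul_left (hs i x))
  have swap : ∀ (a b : A), Commute a b → ∀ x, a * (b * x) = b * (a * x) :=
    fun a b h x => by rw [← mul_assoc, h.eq, mul_assoc]
  refine ⟨?_, ?_, ?_, ?_⟩
  · -- classical Plücker relation: purely even, use the center (a CommRing)
    have key : ∀ a b c d w x y z : Subring.center A,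
        (a*x - b*w)*(c*z - d*y) - (a*y - c*w)*(b*z - d*x)
          + (a*z - d*w)*(b*y - c*x) = 0 := by intros; ring
    have := congrArg (Subtype.val)
      (key ⟨r 0, hrC 0⟩ ⟨r 1, hrC 1⟩ ⟨r 2, hrC 2⟩ ⟨r 3, hrC 3⟩
        ⟨s 0, hsC 0⟩ ⟨s 1, hsC 1⟩ ⟨s 2, hsC 2⟩ ⟨s 3, hsC 3⟩)
    simpa [hq] using this
  · intro i j k _ _
    have key1 : ∀ a b c d e f : Subring.center A,
        (a*e - b*d)*c - (a*f - c*d)*b + (b*f - c*e)*a = 0 := by intros; ring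
    have key2 : ∀ a b c d e f : Subring.center A,
        (a*e - b*d)*f - (a*f - c*d)*e + (b*f - c*e)*d = 0 := by intros; ring
    have e1 : q i j * r k - q i k * r j + q j k * r i = 0 := by
      have := congrArg (Subtype.val)
        (key1 ⟨r i, hrC i⟩ ⟨r j, hrC j⟩ ⟨r k, hrC k⟩ ⟨s i, hsC i⟩ ⟨s j, hsC j⟩ ⟨s k, hsC k⟩)
      simpa [hq] using this
    have e2 : q i j * s k - q i k * s j + q j k * s i = 0 := by
      have := congrArg (Subtype.val)
        (key2 ⟨r i, hrC i⟩ ⟨r j, hrC j⟩ ⟨r k, hrC k⟩ ⟨s i, hsC i⟩ ⟨s j, hsC j⟩ ⟨s k, hsC k⟩)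
      simpa [hq] using this
    calc q i j * lam k - q i k * lam j + q j k * lam i
        = θ * (q i j * r k - q i k * r j + q j k * r i)
            - ξ * (q i j * s k - q i k * s j + q j k * s i) := by
          rw [hlam, hlam, hlam]
          simp only [mul_sub]
          rw [swap _ _ (hqC i j θ), swap _ _ (hqC i j ξ),
            swap _ _ (hqC i k θ), swap _ _ (hqC i k ξ),
            swap _ _ (hqC j k θ), swap _ _ (hqC j k ξ)]
          noncomm_ring
      _ = 0 := by rw [e1, e2]; simp
  · intro i j _
    rw [hlam, hlam, ha, hq]
    have h1 : (θ * r i) * (θ * r j) = 0 := by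
      rw [mul_assoc, swap _ _ (hr i θ), ← mul_assoc, ← mul_assoc, hθ, zero_mul, zero_mul]
    have h2 : (θ * r i) * (ξ * s j) = -(ξ * θ * (r i * s j)) := by
      rw [mul_assoc, swap _ _ (hr i ξ), ← mul_assoc, hξθ, neg_mul, neg_neg]
    have h3 : (ξ * s i) * (θ * r j) = ξ * θ * (r j * s i) := by
      rw [mul_assoc, swap _ _ (hs i θ), ← mul_assoc, (hs i (r j)).eq]
    have h4 : (ξ * s i) * (ξ * s j) = 0 := by
      rw [mul_assoc, swap _ _ (hs i ξ), ← mul_assoc, hξ, zero_mul]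
    rw [sub_mul, mul_sub, mul_sub, h1, h2, h3, h4, mul_sub]
    noncomm_ring
  · intro i
    rw [hlam, ha]
    have hθξ : θ * ξ = -(ξ * θ) := by rw [hξθ, neg_neg]
    have h1 : (θ * r i) * (ξ * θ) = 0 := by
      rw [mul_assoc, swap _ _ (hr i ξ), (hr i θ).eq, ← mul_assoc, ← mul_assoc, hθξ,
        neg_mul, neg_mul, mul_assoc ξ θ θ, hθ, mul_zero, zero_mul, neg_zero]
    have h2 : (ξ * s i) * (ξ * θ) = 0 := by
      rw [mul_assoc, swap _ _ (hs i ξ), ← mul_assoc, hξ, zero_mul]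
    rw [sub_mul, h1, h2, sub_zero]
end

section
/- In a commutative superalgebra A, with notation as in the super Plücker setting, an even element Q = q + λ∧ε₅ + a₅₅ ε₅∧ε₅ of Λ²(A^{4|1}) (with q = Σ_{i<j} q_{ij} e_i∧e_j, λ = Σ λ_i e_i, q_{ij} even, λ_i odd, a₅₅ even) is decomposable as Q = (r + ξε₅) ∧ (s + θε₅) for even vectors r,s and odd ξ,θ if and only if the conditions q = r∧s, λ = θr − ξs, a₅₅ = ξθ hold; and these conditions imply q∧q = 0, q∧λ = 0, λ∧λ = 2 a₅₅ q, and λ a₅₅ = 0. -/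
/-- An element of Λ²(A^{4|1}), written in the basis
(e_i∧e_j for i<j, e_i∧ε₅, ε₅∧ε₅): `qc` are the (even) coefficients of e_i∧e_j,
`lam` the (odd) coefficients of e_i∧ε₅, `a55` the (even) coefficient of ε₅∧ε₅. -/
structure Lambda2 (A : Type) where
  qc : {p : Fin 4 × Fin 4 // p.1 < p.2} → A
  lam : Fin 4 → A
  a55 : A

/-- The wedge product (r + ξε₅) ∧ (s + θε₅) of two even vectors of A^{4|1},
expanded on the basis of Λ²(A^{4|1}). -/
def superWedge {A : Type} [Ring A] (r : Fin 4 → A) (ξ : A) (s : Fin 4 → A) (θ : A) :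
    Lambda2 A where
  qc := fun p => r p.1.1 * s p.1.2 - r p.1.2 * s p.1.1
  lam := fun i => θ * r i - ξ * s i
  a55 := ξ * θ

/-- an even element Q = q + λ∧ε₅ + a₅₅ε₅∧ε₅ of Λ²(A^{4|1}) is
decomposable as (r+ξε₅)∧(s+θε₅) iff q = r∧s, λ = θr − ξs and a₅₅ = ξθ hold
componentwise; and these conditions imply q∧q = 0, q∧λ = 0, λ∧λ = 2a₅₅q and
λa₅₅ = 0 (all written in components). -/
theorem decomposable_super_bivector {A : Type} [Ring A] [Algebra ℂ A]
    (r s : Fin 4 → A) (ξ θ : A)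
    (hr : ∀ i x, Commute (r i) x) (hs : ∀ i x, Commute (s i) x)
    (hξθ : ξ * θ = -(θ * ξ)) (hξ : ξ * ξ = 0) (hθ : θ * θ = 0)
    (Q : Lambda2 A) :
    (Q = superWedge r ξ s θ ↔
      ((∀ p : {p : Fin 4 × Fin 4 // p.1 < p.2},
          Q.qc p = r p.1.1 * s p.1.2 - r p.1.2 * s p.1.1) ∧
       (∀ i, Q.lam i = θ * r i - ξ * s i) ∧ Q.a55 = ξ * θ)) ∧
    (Q = superWedge r ξ s θ →
      ((∀ (h01 : ((0:Fin 4),(1:Fin 4)).1 < ((0:Fin 4),(1:Fin 4)).2)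
          (h23 : ((2:Fin 4),(3:Fin 4)).1 < ((2:Fin 4),(3:Fin 4)).2)
          (h02 : ((0:Fin 4),(2:Fin 4)).1 < ((0:Fin 4),(2:Fin 4)).2)
          (h13 : ((1:Fin 4),(3:Fin 4)).1 < ((1:Fin 4),(3:Fin 4)).2)
          (h03 : ((0:Fin 4),(3:Fin 4)).1 < ((0:Fin 4),(3:Fin 4)).2)
          (h12 : ((1:Fin 4),(2:Fin 4)).1 < ((1:Fin 4),(2:Fin 4)).2),
          Q.qc ⟨_, h01⟩ * Q.qc ⟨_, h23⟩ - Q.qc ⟨_, h02⟩ * Q.qc ⟨_, h13⟩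
            + Q.qc ⟨_, h03⟩ * Q.qc ⟨_, h12⟩ = 0) ∧
       (∀ (i j k : Fin 4) (hij : i < j) (hik : i < k) (hjk : j < k),
          Q.qc ⟨(i,j), hij⟩ * Q.lam k - Q.qc ⟨(i,k), hik⟩ * Q.lam j
            + Q.qc ⟨(j,k), hjk⟩ * Q.lam i = 0) ∧
       (∀ (i j : Fin 4) (hij : i < j),
          Q.lam i * Q.lam j - Q.lam j * Q.lam i = 2 * (Q.a55 * Q.qc ⟨(i,j), hij⟩)) ∧
       (∀ i : Fin 4, Q.lam i * Q.a55 = 0))) := by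
  have hθξ : θ * ξ = -(ξ * θ) := by rw [hξθ, neg_neg]
  let R : Fin 4 → Subring.center A :=
    fun i => ⟨r i, Subring.mem_center_iff.mpr fun x => (hr i x).symm⟩
  let S : Fin 4 → Subring.center A :=
    fun i => ⟨s i, Subring.mem_center_iff.mpr fun x => (hs i x).symm⟩
  constructor
  · constructor
    · rintro rfl
      exact ⟨fun p => rfl, fun i => rfl, rfl⟩
    · rintro ⟨h1, h2, h3⟩
      cases Q with
      | mk qc lam a55 =>
        simp only [superWedge, Lambda2.mk.injEq]
        exact ⟨funext fun p => h1 p, funext h2, h3⟩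
  · rintro rfl
    refine ⟨?_, ?_, ?_, ?_⟩
    · -- Plücker relation q∧q = 0
      intro h01 h23 h02 h13 h03 h12
      simp only [superWedge]
      have key : (R 0 * S 1 - R 1 * S 0) * (R 2 * S 3 - R 3 * S 2)
          - (R 0 * S 2 - R 2 * S 0) * (R 1 * S 3 - R 3 * S 1)
          + (R 0 * S 3 - R 3 * S 0) * (R 1 * S 2 - R 2 * S 1) = 0 := by ring
      have := congrArg Subtype.val key
      push_cast at this
      exact this
    · -- q∧λ = 0
      intro i j k hij hik hjk
      simp only [superWedge]
      have expand : ∀ q a b : A, (∀ x, Commute q x) →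
          q * (θ * a - ξ * b) = θ * (q * a) - ξ * (q * b) := by
        intro q a b hq
        rw [mul_sub, ← mul_assoc, ← mul_assoc, (hq θ).eq, (hq ξ).eq, mul_assoc, mul_assoc]
      have hq1 : ∀ x, Commute (r i * s j - r j * s i) x := fun x =>
        ((hr i x).mul_left (hs j x)).sub_left ((hr j x).mul_left (hs i x))
      have hq2 : ∀ x, Commute (r i * s k - r k * s i) x := fun x =>
        ((hr i x).mul_left (hs k x)).sub_left ((hr k x).mul_left (hs i x))
      have hq3 : ∀ x, Commute (r j * s k - r k * s j) x := fun x =>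
        ((hr j x).mul_left (hs k x)).sub_left ((hr k x).mul_left (hs j x))
      rw [expand _ _ _ hq1, expand _ _ _ hq2, expand _ _ _ hq3]
      have E1 : (r i * s j - r j * s i) * r k - (r i * s k - r k * s i) * r j
          + (r j * s k - r k * s j) * r i = 0 := by
        have key : (R i * S j - R j * S i) * R k - (R i * S k - R k * S i) * R j
            + (R j * S k - R k * S j) * R i = 0 := by ring
        have := congrArg Subtype.val key
        push_cast at this
        exact this
      have E2 : (r i * s j - r j * s i) * s k - (r i * s k - r k * s i) * s j
          + (r j * s k - r k * s j) * s i = 0 := by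
        have key : (R i * S j - R j * S i) * S k - (R i * S k - R k * S i) * S j
            + (R j * S k - R k * S j) * S i = 0 := by ring
        have := congrArg Subtype.val key
        push_cast at this
        exact this
      calc θ * ((r i * s j - r j * s i) * r k) - ξ * ((r i * s j - r j * s i) * s k)
            - (θ * ((r i * s k - r k * s i) * r j) - ξ * ((r i * s k - r k * s i) * s j))
            + (θ * ((r j * s k - r k * s j) * r i) - ξ * ((r j * s k - r k * s j) * s i))
          = θ * ((r i * s j - r j * s i) * r k - (r i * s k - r k * s i) * r j
              + (r j * s k - r k * s j) * r i)
            - ξ * ((r i * s j - r j * s i) * s k - (r i * s k - r k * s i) * s j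
              + (r j * s k - r k * s j) * s i) := by noncomm_ring
        _ = 0 := by rw [E1, E2, mul_zero, mul_zero, sub_zero]
    · -- λ∧λ = 2 a₅₅ q
      intro i j hij
      simp only [superWedge]
      have key : ∀ a b c d : A, (∀ x, Commute a x) → (∀ x, Commute b x) →
          (θ * a - ξ * b) * (θ * c - ξ * d) = ξ * (θ * (a * d)) - ξ * (θ * (b * c)) := by
        intro a b c d ha hb
        simp only [mul_sub, sub_mul, mul_assoc]
        rw [(ha θ).left_comm, (ha ξ).left_comm, (hb θ).left_comm, (hb ξ).left_comm,
          ← mul_assoc θ θ, hθ, ← mul_assoc ξ ξ, hξ, ← mul_assoc θ ξ, hθξ]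
        noncomm_ring
      rw [key _ _ _ _ (hr i) (hs i), key _ _ _ _ (hr j) (hs j)]
      have hcomm : r j * s i = s i * r j := (hr j (s i)).eq
      have hcomm2 : r i * s j = s j * r i := (hr i (s j)).eq
      rw [← hcomm, ← hcomm2]
      noncomm_ring
    · -- λ a₅₅ = 0
      intro i
      simp only [superWedge]
      have t1 : θ * r i * (ξ * θ) = 0 := by
        rw [mul_assoc, (hr i (ξ * θ)).eq, ← mul_assoc, ← mul_assoc, hθξ, neg_mul, neg_mul,
          mul_assoc ξ θ θ, hθ, mul_zero, zero_mul, neg_zero]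
      have t2 : ξ * s i * (ξ * θ) = 0 := by
        rw [mul_assoc, (hs i (ξ * θ)).eq, ← mul_assoc, ← mul_assoc, hξ, zero_mul, zero_mul]
      rw [sub_mul, t1, t2, sub_zero]
end

section
/- In the quantum matrix superalgebra M_q(4|1) with Manin's commutation relations, define the quantum minors D_{ij} = a_{i1}a_{j2} − q⁻¹ a_{i2}a_{j1} for 1 ≤ i < j ≤ 5 and D₅₅ = a₅₁a₅₂. Then D_{ij} D₅₅ = q⁻² D₅₅ D_{ij} for all 1 ≤ i < j ≤ 4. -/
/-- The Koszul-type sign (−1)^{π(a_{ij})π(a_{kl})} appearing in Manin's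
commutation relations, where π(a_{ij}) = p(i)+p(j) mod 2. -/
def msgn {R : Type} [Ring R] {n : ℕ} (P : Fin n → Bool) (i j k l : Fin n) : R :=
  if (P i != P j) && (P k != P l) then -1 else 1

/-- Manin's commutation relations for the quantum matrix superalgebra M_q(m|n),
for a matrix of elements `a` of a ring `R`, with parity function `P` on the
indices (P i = true meaning the index i is odd) and central invertible
parameter `q`. -/
structure IsManin {R : Type} [Ring R] {n : ℕ} (P : Fin n → Bool) (q : Rˣ)
    (a : Fin n → Fin n → R) : Prop where
  central : ∀ x : R, Commute (q : R) x
  row : ∀ i j l, j < l →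
    a i j * a i l = msgn P i j i l * ((if P i then (q : R) else (↑q⁻¹ : R)) * (a i l * a i j))
  col : ∀ i k j, i < k →
    a i j * a k j = msgn P i j k j * ((if P j then (q : R) else (↑q⁻¹ : R)) * (a k j * a i j))
  cross : ∀ i j k l, i < k → l < j →
    a i j * a k l = msgn P i j k l * (a k l * a i j)
  diag : ∀ i j k l, i < k → j < l →
    a i j * a k l - msgn P i j k l * (a k l * a i j)
      = msgn P i j k j * (((↑q⁻¹ : R) - (q : R)) * (a k j * a i l))
  sq : ∀ i j, (P i != P j) → a i j * a i j = 0

/-- The parity function for M_q(4|1): the index 5 (here `4 : Fin 5`) is odd. -/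
def P41 : Fin 5 → Bool := fun i => i == 4

/-- The quantum minor D_{ij} = a_{i1}a_{j2} − q⁻¹ a_{i2}a_{j1} built on
columns 1,2. -/
def Dmin {R : Type} [Ring R] (q : Rˣ) (a : Fin 5 → Fin 5 → R) (i j : Fin 5) : R :=
  a i 0 * a j 1 - (↑q⁻¹ : R) * (a i 1 * a j 0)

/-- The quantum minor D₅₅ = a₅₁ a₅₂. -/
def D55 {R : Type} [Ring R] (a : Fin 5 → Fin 5 → R) : R :=
  a 4 0 * a 4 1

section Aux
variable {R : Type} [Ring R] {q : Rˣ} {a : Fin 5 → Fin 5 → R}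

lemma qinv_central (h : IsManin P41 q a) (x : R) : (↑q⁻¹ : R) * x = x * (↑q⁻¹ : R) :=
  ((h.central x).units_inv_left).eq

lemma qinv_sub_q_central (h : IsManin P41 q a) (x : R) :
    ((↑q⁻¹ : R) - ↑q) * x = x * ((↑q⁻¹ : R) - ↑q) := by
  rw [sub_mul, mul_sub, qinv_central h, (h.central x).eq]

/-- a i 0 q⁻¹-commutes past D55 for i < 4. -/
lemma gen0_D55 (h : IsManin P41 q a) (i : Fin 5) (hi : i < 4) :
    a i 0 * D55 a = (↑q⁻¹ : R) * (D55 a * a i 0) := by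
  have hP : P41 i = false := by
    have : i ≠ 4 := Fin.ne_of_lt hi
    simp [P41, this]
  have h0 : P41 0 = false := rfl
  have h1 : P41 1 = false := rfl
  have h4 : P41 4 = true := rfl
  have e1 : a i 0 * a 4 0 = (↑q⁻¹ : R) * (a 4 0 * a i 0) := by
    simpa [msgn, hP, h0, h4] using h.col i 4 0 hi
  have e2 : a i 0 * a 4 1 = a 4 1 * a i 0 + ((↑q⁻¹ : R) - ↑q) * (a 4 0 * a i 1) := by
    have := h.diag i 0 4 1 hi (by decide)
    simp only [msgn, hP, h0, h1, h4] at this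
    norm_num at this
    have := eq_add_of_sub_eq this
    rw [add_comm] at this
    exact this
  have e3 : a 4 0 * a 4 0 = 0 := h.sq 4 0 (by decide)
  have key : ((↑q⁻¹ : R) - ↑q) * (a 4 0 * a i 1)
      = a 4 0 * (((↑q⁻¹ : R) - ↑q) * a i 1) := by
    rw [← mul_assoc, qinv_sub_q_central h (a 4 0), mul_assoc]
  calc a i 0 * D55 a = (a i 0 * a 4 0) * a 4 1 := by rw [D55, mul_assoc]
    _ = (↑q⁻¹ : R) * (a 4 0 * (a i 0 * a 4 1)) := by rw [e1, mul_assoc, mul_assoc]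
    _ = (↑q⁻¹ : R) * (a 4 0 * a 4 1 * a i 0
          + a 4 0 * a 4 0 * (((↑q⁻¹ : R) - ↑q) * a i 1)) := by
        rw [e2, mul_add, key]
        simp only [← mul_assoc]
    _ = (↑q⁻¹ : R) * (D55 a * a i 0) := by rw [e3, zero_mul, add_zero, D55]

/-- a i 1 q⁻¹-commutes past D55 for i < 4. -/
lemma gen1_D55 (h : IsManin P41 q a) (i : Fin 5) (hi : i < 4) :
    a i 1 * D55 a = (↑q⁻¹ : R) * (D55 a * a i 1) := by
  have hP : P41 i = false := by
    have : i ≠ 4 := Fin.ne_of_lt hi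
    simp [P41, this]
  have h0 : P41 0 = false := rfl
  have h1 : P41 1 = false := rfl
  have h4 : P41 4 = true := rfl
  have e1 : a i 1 * a 4 0 = a 4 0 * a i 1 := by
    simpa [msgn, hP, h0, h1, h4] using h.cross i 1 4 0 hi (by decide)
  have e2 : a i 1 * a 4 1 = (↑q⁻¹ : R) * (a 4 1 * a i 1) := by
    simpa [msgn, hP, h1, h4] using h.col i 4 1 hi
  calc a i 1 * D55 a = (a i 1 * a 4 0) * a 4 1 := by rw [D55, mul_assoc]
    _ = a 4 0 * (a i 1 * a 4 1) := by rw [e1, mul_assoc]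
    _ = a 4 0 * ((↑q⁻¹ : R) * (a 4 1 * a i 1)) := by rw [e2]
    _ = (↑q⁻¹ : R) * (D55 a * a i 1) := by
        rw [← mul_assoc, ← qinv_central h (a 4 0), mul_assoc, D55, mul_assoc]

lemma prod_D55 (h : IsManin P41 q a) {x y : R}
    (hx : x * D55 a = (↑q⁻¹ : R) * (D55 a * x))
    (hy : y * D55 a = (↑q⁻¹ : R) * (D55 a * y)) :
    (x * y) * D55 a = (↑q⁻¹ : R) ^ 2 * (D55 a * (x * y)) := by
  calc (x * y) * D55 a = x * (y * D55 a) := by rw [mul_assoc]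
    _ = x * ((↑q⁻¹ : R) * (D55 a * y)) := by rw [hy]
    _ = (↑q⁻¹ : R) * ((x * D55 a) * y) := by
        rw [← mul_assoc, ← qinv_central h x, mul_assoc, mul_assoc]
    _ = (↑q⁻¹ : R) * (((↑q⁻¹ : R) * (D55 a * x)) * y) := by rw [hx]
    _ = (↑q⁻¹ : R) ^ 2 * (D55 a * (x * y)) := by
        rw [sq, mul_assoc, mul_assoc, mul_assoc]

end Aux

/-- in M_q(4|1), D_{ij} D₅₅ = q⁻² D₅₅ D_{ij} for 1 ≤ i < j ≤ 4. -/
theorem Dij_D55_commutation {R : Type} [Ring R] (q : Rˣ)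
    (a : Fin 5 → Fin 5 → R) (h : IsManin P41 q a) :
    ∀ i j : Fin 5, i < j → j ≠ 4 →
      Dmin q a i j * D55 a = (↑q⁻¹ : R) ^ 2 * (D55 a * Dmin q a i j) := by
  intro i j hij hj4
  have hj : j < 4 := by omega
  have hi : i < 4 := lt_trans hij hj
  rw [Dmin, sub_mul, prod_D55 h (gen0_D55 h i hi) (gen1_D55 h j hj),
    mul_assoc ((↑q⁻¹ : R)), prod_D55 h (gen1_D55 h i hi) (gen0_D55 h j hj)]
  have hD : D55 a * ((↑q⁻¹ : R) * (a i 1 * a j 0))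
      = (↑q⁻¹ : R) * (D55 a * (a i 1 * a j 0)) := by
    rw [← mul_assoc, ← qinv_central h (D55 a), mul_assoc]
  rw [mul_sub, hD]
  simp only [← mul_assoc]
  rw [← pow_succ', mul_sub]
  simp only [← mul_assoc]
  rw [← pow_succ]
end

section
/- In M_q(4|1), with D_{i5} = a_{i1}a_{52} − q⁻¹ a_{i2}a_{51} (odd quantum minors, 1 ≤ i ≤ 4) and D₅₅ = a₅₁a₅₂, the relations D_{i5} D₅₅ = 0 and D₅₅ D_{i5} = 0 hold for all 1 ≤ i ≤ 4. -/
/-- in M_q(4|1), the odd minors D_{i5} satisfy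
D_{i5} D₅₅ = 0 = D₅₅ D_{i5} for 1 ≤ i ≤ 4. -/
theorem Di5_D55_vanishing {R : Type} [Ring R] (q : Rˣ)
    (a : Fin 5 → Fin 5 → R) (h : IsManin P41 q a) :
    ∀ i : Fin 5, i ≠ 4 →
      Dmin q a i 4 * D55 a = 0 ∧ D55 a * Dmin q a i 4 = 0 := by
  intro i hi
  have hvi : i.val < 4 := by
    have h5 := i.isLt
    have hne : i.val ≠ 4 := fun hh => hi (Fin.ext hh)
    omega
  have hlt : i < (4 : Fin 5) := by
    rw [Fin.lt_def]; simpa using hvi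
  set x0 := a i 0 with hx0
  set x1 := a i 1 with hx1
  set y0 := a 4 0 with hy0
  set y1 := a 4 1 with hy1
  have h1 : y0 * y0 = 0 := h.sq 4 0 (by decide)
  have h2 : y1 * y1 = 0 := h.sq 4 1 (by decide)
  have h3 : y0 * y1 = -((q : R) * (y1 * y0)) := by
    have := h.row 4 0 1 (by decide)
    simpa [msgn, P41] using this
  have h3' : y1 * y0 = -((↑q⁻¹ : R) * (y0 * y1)) := by
    rw [h3, mul_neg, neg_neg, ← mul_assoc, Units.inv_mul, one_mul]
  have h5 : x1 * y0 = y0 * x1 := by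
    simpa [msgn, P41, hi] using h.cross i 1 4 0 hlt (by decide)
  have h6 : y1 * x0 = x0 * y1 - ((↑q⁻¹ : R) - (q : R)) * (y0 * x1) := by
    have hd := h.diag i 0 4 1 hlt (by decide)
    simp [msgn, P41, hi] at hd
    rw [← hd]; abel
  have k1 : y1 * (y0 * y1) = 0 := by
    rw [← mul_assoc, h3', neg_mul, mul_assoc, mul_assoc, h2, mul_zero, mul_zero, neg_zero]
  have k0 : y0 * (y0 * y1) = 0 := by
    rw [← mul_assoc, h1, zero_mul]
  have hcq : ∀ x : R, Commute ((↑q⁻¹ : R)) x := fun x => (h.central x).units_inv_left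
  have hcc : ∀ x : R, Commute ((↑q⁻¹ : R) - (q : R)) x :=
    fun x => (hcq x).sub_left (h.central x)
  have tA : (y0 * y1) * (x0 * y1) = 0 := by
    calc (y0 * y1) * (x0 * y1) = y0 * (y1 * x0) * y1 := by noncomm_ring
      _ = y0 * (x0 * y1 - ((↑q⁻¹ : R) - (q : R)) * (y0 * x1)) * y1 := by rw [h6]
      _ = y0 * (x0 * (y1 * y1)) - y0 * ((↑q⁻¹ : R) - (q : R)) * ((y0 * x1) * y1) := by
          noncomm_ring
      _ = y0 * (x0 * (y1 * y1)) - ((↑q⁻¹ : R) - (q : R)) * y0 * ((y0 * x1) * y1) := by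
          rw [← (hcc y0).eq]
      _ = y0 * (x0 * (y1 * y1)) - ((↑q⁻¹ : R) - (q : R)) * ((y0 * y0) * (x1 * y1)) := by
          noncomm_ring
      _ = 0 := by simp only [h1, h2, mul_zero, zero_mul, sub_zero]
  have tB : (y0 * y1) * (x1 * y0) = 0 := by
    calc (y0 * y1) * (x1 * y0) = (y0 * y1) * (y0 * x1) := by rw [h5]
      _ = y0 * (y1 * y0) * x1 := by noncomm_ring
      _ = y0 * -((↑q⁻¹ : R) * (y0 * y1)) * x1 := by rw [h3']
      _ = -(y0 * (↑q⁻¹ : R) * ((y0 * y1) * x1)) := by noncomm_ring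
      _ = -((↑q⁻¹ : R) * y0 * ((y0 * y1) * x1)) := by rw [← (hcq y0).eq]
      _ = -((↑q⁻¹ : R) * ((y0 * (y0 * y1)) * x1)) := by noncomm_ring
      _ = 0 := by rw [k0, zero_mul, mul_zero, neg_zero]
  constructor
  · show (x0 * y1 - (↑q⁻¹ : R) * (x1 * y0)) * (y0 * y1) = 0
    have e : (x0 * y1 - (↑q⁻¹ : R) * (x1 * y0)) * (y0 * y1)
        = x0 * (y1 * (y0 * y1)) - (↑q⁻¹ : R) * (x1 * (y0 * (y0 * y1))) := by
      noncomm_ring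
    rw [e, k1, k0, mul_zero, mul_zero, mul_zero, sub_zero]
  · show (y0 * y1) * (x0 * y1 - (↑q⁻¹ : R) * (x1 * y0)) = 0
    calc (y0 * y1) * (x0 * y1 - (↑q⁻¹ : R) * (x1 * y0))
        = (y0 * y1) * (x0 * y1) - (y0 * y1) * ((↑q⁻¹ : R) * (x1 * y0)) := by rw [mul_sub]
      _ = (y0 * y1) * (x0 * y1) - (↑q⁻¹ : R) * ((y0 * y1) * (x1 * y0)) := by
          rw [((hcq (y0 * y1)).symm).left_comm]
      _ = 0 := by rw [tA, tB, mul_zero, sub_zero]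
end

section
/- In M_q(4|1), the quantum super Plücker relation D_{i5} D_{j5} = q D_{ij} D₅₅ holds for all 1 ≤ i < j ≤ 4, where D_{ij} = a_{i1}a_{j2} − q⁻¹ a_{i2}a_{j1}, D_{i5} = a_{i1}a_{52} − q⁻¹ a_{i2}a_{51}, and D₅₅ = a₅₁a₅₂. -/

lemma key {R : Type} [Ring R] (q Q u v x y z w : R)
    (hq : ∀ t, q*t = t*q) (hQ : ∀ t, Q*t = t*Q)
    (hqQ : q*Q = 1) (hQq : Q*q = 1)
    (hxu : x*u = Q*(u*x)) (hyu : y*u = u*y) (hzu : z*u = Q*(u*z)) (hwu : w*u = u*w)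
    (hxv : x*v = v*x + (Q-q)*(u*y)) (hyv : y*v = Q*(v*y))
    (hzv : z*v = v*z + (Q-q)*(u*w)) (hwv : w*v = Q*(v*w))
    (hvu : v*u = -(Q*(u*v)))
    (hu : u*u = 0) (hv : v*v = 0) :
    (x*v - Q*(y*u))*(z*v - Q*(w*u)) = q*((x*w - Q*(y*z))*(u*v)) := by
  have gen1 : ∀ a b c d : R, a*b = c*d → ∀ t, a*(b*t) = c*(d*t) := by
    intro a b c d hab t; rw [← mul_assoc, hab, mul_assoc]
  have gen2 : ∀ a b c d e : R, a*b = c*(d*e) → ∀ t, a*(b*t) = c*(d*(e*t)) := by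
    intro a b c d e hab t; rw [← mul_assoc, hab, mul_assoc, mul_assoc]
  have gend : ∀ a b c d e f g : R, a*b = c*d + e*(f*g) →
      ∀ t, a*(b*t) = c*(d*t) + e*(f*(g*t)) := by
    intro a b c d e f g hab t; rw [← mul_assoc, hab, add_mul, mul_assoc, mul_assoc, mul_assoc]
  have genn : ∀ a b c d e : R, a*b = -(c*(d*e)) → ∀ t, a*(b*t) = -(c*(d*(e*t))) := by
    intro a b c d e hab t; rw [← mul_assoc, hab, neg_mul, mul_assoc, mul_assoc]
  have gen0 : ∀ a b : R, a*b = 0 → ∀ t, a*(b*t) = 0 := by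
    intro a b hab t; rw [← mul_assoc, hab, zero_mul]
  have pull : ∀ s : R, (∀ t, s*t = t*s) → ∀ r t : R, r*(s*t) = s*(r*t) := by
    intro s hs r t; rw [← mul_assoc, ← hs, mul_assoc]
  have Gxu := gen2 _ _ _ _ _ hxu
  have Gyu := gen1 _ _ _ _ hyu
  have Gzu := gen2 _ _ _ _ _ hzu
  have Gwu := gen1 _ _ _ _ hwu
  have Gxv := gend _ _ _ _ _ _ _ hxv
  have Gyv := gen2 _ _ _ _ _ hyv
  have Gzv := gend _ _ _ _ _ _ _ hzv
  have Gwv := gen2 _ _ _ _ _ hwv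
  have Gvu := genn _ _ _ _ _ hvu
  have Gu := gen0 _ _ hu
  have Gv := gen0 _ _ hv
  have cq : ∀ t, q*(Q*t) = t := by intro t; rw [← mul_assoc, hqQ, one_mul]
  have cQ : ∀ t, Q*(q*t) = t := by intro t; rw [← mul_assoc, hQq, one_mul]
  have Puq := pull q hq u
  have Pvq := pull q hq v
  have Pxq := pull q hq x
  have Pyq := pull q hq y
  have Pzq := pull q hq z
  have Pwq := pull q hq w
  have PuQ := pull Q hQ u
  have PvQ := pull Q hQ v
  have PxQ := pull Q hQ x
  have PyQ := pull Q hQ y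
  have PzQ := pull Q hQ z
  have PwQ := pull Q hQ w
  simp only [mul_assoc, mul_add, add_mul, mul_sub, sub_mul, mul_neg, neg_mul, mul_zero, zero_mul,
    mul_one, one_mul, neg_neg, zero_mul, mul_zero, zero_add, add_zero, sub_zero, zero_sub,
    Gxu, Gyu, Gzu, Gwu, Gxv, Gyv, Gzv, Gwv, Gvu, Gu, Gv,
    hxu, hyu, hzu, hwu, hxv, hyv, hzv, hwv, hvu, hu, hv,
    Puq, Pvq, Pxq, Pyq, Pzq, Pwq, PuQ, PvQ, PxQ, PyQ, PzQ, PwQ,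
    cq, cQ, hqQ, hQq]
  noncomm_ring

/-- in M_q(4|1), the quantum super Plücker relation
D_{i5} D_{j5} = q D_{ij} D₅₅ holds for 1 ≤ i < j ≤ 4. -/
theorem quantum_super_plucker_odd {R : Type} [Ring R] (q : Rˣ)
    (a : Fin 5 → Fin 5 → R) (h : IsManin P41 q a) :
    ∀ i j : Fin 5, i < j → j ≠ 4 →
      Dmin q a i 4 * Dmin q a j 4 = (q : R) * (Dmin q a i j * D55 a) := by
  intro i j hij hj4
  have hjv : (j : ℕ) < 4 := by
    have h1 := j.isLt
    have h2 : (j : ℕ) ≠ 4 := fun hc => hj4 (Fin.ext hc)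
    omega
  have hj4' : j < (4 : Fin 5) := by rw [Fin.lt_def]; exact hjv
  have hi4' : i < (4 : Fin 5) := lt_trans hij hj4'
  have hi4 : i ≠ 4 := ne_of_lt hi4'
  have hq : ∀ t : R, (q : R) * t = t * (q : R) := fun t => (h.central t).eq
  have hQ : ∀ t : R, (↑q⁻¹ : R) * t = t * (↑q⁻¹ : R) := fun t => ((h.central t).units_inv_left).eq
  have hqQ : (q : R) * (↑q⁻¹ : R) = 1 := Units.mul_inv q
  have hQq : (↑q⁻¹ : R) * (q : R) = 1 := Units.inv_mul q
  have hxu := h.col i 4 0 hi4'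
  have hyv := h.col i 4 1 hi4'
  have hzu := h.col j 4 0 hj4'
  have hwv := h.col j 4 1 hj4'
  have hyu := h.cross i 1 4 0 hi4' (by decide)
  have hwu := h.cross j 1 4 0 hj4' (by decide)
  have hxv := h.diag i 0 4 1 hi4' (by decide)
  have hzv := h.diag j 0 4 1 hj4' (by decide)
  have hij' := h.diag i 0 j 1 hij (by decide)
  have huv := h.row 4 0 1 (by decide)
  have hu := h.sq 4 0 (by decide)
  have hv := h.sq 4 1 (by decide)
  simp only [msgn, P41] at hxu hyv hzu hwv hyu hwu hxv hzv huv
  simp [hi4, hj4] at hxu hyv hzu hwv hyu hwu hxv hzv huv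
  have hvu : a 4 1 * a 4 0 = -((↑q⁻¹ : R) * (a 4 0 * a 4 1)) := by
    rw [huv, mul_neg, ← mul_assoc, hQq, one_mul, neg_neg]
  have hxv' : a i 0 * a 4 1 = a 4 1 * a i 0 + ((↑q⁻¹ : R) - (q : R)) * (a 4 0 * a i 1) :=
    by rw [← sub_eq_iff_eq_add']; exact hxv
  have hzv' : a j 0 * a 4 1 = a 4 1 * a j 0 + ((↑q⁻¹ : R) - (q : R)) * (a 4 0 * a j 1) :=
    by rw [← sub_eq_iff_eq_add']; exact hzv
  show (a i 0 * a 4 1 - (↑q⁻¹ : R) * (a i 1 * a 4 0)) *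
      (a j 0 * a 4 1 - (↑q⁻¹ : R) * (a j 1 * a 4 0)) =
    (q : R) * ((a i 0 * a j 1 - (↑q⁻¹ : R) * (a i 1 * a j 0)) * (a 4 0 * a 4 1))
  exact key (q : R) (↑q⁻¹ : R) (a 4 0) (a 4 1) (a i 0) (a i 1) (a j 0) (a j 1)
    hq hQ hqQ hQq hxu hyu hzu hwu hxv' hyv hzv' hwv hvu hu hv
end

section
/- In M_q(4|1), the quantum Plücker relations D₁₂D₃₄ − q⁻¹ D₁₃D₂₄ + q⁻² D₁₄D₂₃ = 0 and, for 1 ≤ i < j < k ≤ 4, D_{ij}D_{k5} − q⁻¹ D_{ik}D_{j5} + q⁻² D_{i5}D_{jk} = 0 hold, where D_{rs} = a_{r1}a_{s2} − q⁻¹ a_{r2}a_{s1}. -/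
private lemma plk_cert {R : Type} [Ring R] (u v : R)
    (w0 w1 x0 x1 y0 y1 z0 z1 : R)
    (hu : ∀ t : R, u * t = t * u) (hv : ∀ t : R, v * t = t * v)
    (huv : u * v = 1)
    (cxy0 : y0 * x0 = v * (x0 * y0)) (cxy1 : y1 * x1 = v * (x1 * y1))
    (cxz0 : z0 * x0 = v * (x0 * z0)) (cxz1 : z1 * x1 = v * (x1 * z1))
    (cyz0 : z0 * y0 = v * (y0 * z0)) (cyz1 : z1 * y1 = v * (y1 * z1))
    (rxy : y0 * x1 = x1 * y0) (rxz : z0 * x1 = x1 * z0) (ryz : z0 * y1 = y1 * z0)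
    (dxy : y1 * x0 = x0 * y1 - u * (y0 * x1) + v * (y0 * x1))
    (dxz : z1 * x0 = x0 * z1 - u * (z0 * x1) + v * (z0 * x1))
    (dyz : z1 * y0 = y0 * z1 - u * (z0 * y1) + v * (z0 * y1)) :
    (w0 * x1 - u * (w1 * x0)) * (y0 * z1 - u * (y1 * z0))
      - u * ((w0 * y1 - u * (w1 * y0)) * (x0 * z1 - u * (x1 * z0)))
      + u ^ 2 * ((w0 * z1 - u * (w1 * z0)) * (x0 * y1 - u * (x1 * y0))) = 0 := by
  have zuv : u * v - 1 = 0 := sub_eq_zero_of_eq huv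
  have zcu : ∀ t : R, t * u - u * t = 0 := fun t => sub_eq_zero_of_eq (hu t).symm
  have zcv : ∀ t : R, t * v - v * t = 0 := fun t => sub_eq_zero_of_eq (hv t).symm
  have zcxy0 := sub_eq_zero_of_eq cxy0
  have zcxy1 := sub_eq_zero_of_eq cxy1
  have zcxz0 := sub_eq_zero_of_eq cxz0
  have zcxz1 := sub_eq_zero_of_eq cxz1
  have zcyz0 := sub_eq_zero_of_eq cyz0
  have zcyz1 := sub_eq_zero_of_eq cyz1
  have zrxy := sub_eq_zero_of_eq rxy
  have zrxz := sub_eq_zero_of_eq rxz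
  have zryz := sub_eq_zero_of_eq ryz
  have zdxy := sub_eq_zero_of_eq dxy
  have zdxz := sub_eq_zero_of_eq dxz
  have zdyz := sub_eq_zero_of_eq dyz
  have cert : (w0 * x1 - u * (w1 * x0)) * (y0 * z1 - u * (y1 * z0))
      - u * ((w0 * y1 - u * (w1 * y0)) * (x0 * z1 - u * (x1 * z0)))
      + u ^ 2 * ((w0 * z1 - u * (w1 * z0)) * (x0 * y1 - u * (x1 * y0))) =
      (u * u * u * w1 * (z0 * u - u * z0) * x1 * y0) +
      (u * u * u * (w1 * u - u * w1) * z0 * x1 * y0) +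
      (u * u * u * u * w1 * (z0 * x1 - x1 * z0) * y0) +
      (u * u * u * u * w1 * x1 * (z0 * y0 - v * (y0 * z0))) +
      (u * u * u * u * w1 * (x1 * v - v * x1) * y0 * z0) +
      (u * u * u * u * (w1 * v - v * w1) * x1 * y0 * z0) +
      (u * u * u * (u * v - 1) * w1 * x1 * y0 * z0) -
      (u * u * u * w1 * (z0 * x0 - v * (x0 * z0)) * y1) -
      (u * u * u * (w1 * v - v * w1) * x0 * z0 * y1) -
      (u * u * (u * v - 1) * w1 * x0 * z0 * y1) -
      (u * u * w1 * x0 * (z0 * y1 - y1 * z0)) -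
      (u * u * w0 * (z1 * u - u * z1) * x1 * y0) -
      (u * u * (w0 * u - u * w0) * z1 * x1 * y0) -
      (u * u * u * w0 * (z1 * x1 - v * (x1 * z1)) * y0) -
      (u * u * u * (w0 * v - v * w0) * x1 * z1 * y0) -
      (u * u * (u * v - 1) * w0 * x1 * z1 * y0) -
      (u * u * w0 * x1 * (z1 * y0 - (y0 * z1 - u * (z0 * y1) + v * (z0 * y1)))) -
      (u * u * w0 * (x1 * v - v * x1) * z0 * y1) -
      (u * u * (w0 * v - v * w0) * x1 * z0 * y1) -
      (u * (u * v - 1) * w0 * x1 * z0 * y1) -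
      (u * w0 * x1 * (z0 * y1 - y1 * z0)) +
      (u * u * w0 * (x1 * u - u * x1) * z0 * y1) +
      (u * u * (w0 * u - u * w0) * x1 * z0 * y1) +
      (u * u * u * w0 * x1 * (z0 * y1 - y1 * z0)) +
      (u * u * w0 * (z1 * x0 - (x0 * z1 - u * (z0 * x1) + v * (z0 * x1))) * y1) +
      (u * u * (w0 * v - v * w0) * z0 * x1 * y1) +
      (u * (u * v - 1) * w0 * z0 * x1 * y1) +
      (u * w0 * (z0 * x1 - x1 * z0) * y1) +
      (u * w0 * x1 * (z0 * y1 - y1 * z0)) -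
      (u * u * (w0 * u - u * w0) * z0 * x1 * y1) -
      (u * u * u * w0 * (z0 * x1 - x1 * z0) * y1) -
      (u * u * u * w0 * x1 * (z0 * y1 - y1 * z0)) +
      (u * u * w0 * x0 * (z1 * y1 - v * (y1 * z1))) +
      (u * u * w0 * (x0 * v - v * x0) * y1 * z1) +
      (u * u * (w0 * v - v * w0) * x0 * y1 * z1) +
      (u * (u * v - 1) * w0 * x0 * y1 * z1) -
      (u * u * w1 * (y0 * u - u * y0) * x1 * z0) -
      (u * u * (w1 * u - u * w1) * y0 * x1 * z0) -
      (u * u * u * w1 * (y0 * x1 - x1 * y0) * z0) +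
      (u * u * w1 * (y0 * x0 - v * (x0 * y0)) * z1) +
      (u * u * (w1 * v - v * w1) * x0 * y0 * z1) +
      (u * (u * v - 1) * w1 * x0 * y0 * z1) +
      (u * w0 * (y1 * u - u * y1) * x1 * z0) +
      (u * (w0 * u - u * w0) * y1 * x1 * z0) +
      (u * u * w0 * (y1 * x1 - v * (x1 * y1)) * z0) +
      (u * u * (w0 * v - v * w0) * x1 * y1 * z0) +
      (u * (u * v - 1) * w0 * x1 * y1 * z0) -
      (u * w0 * (y1 * x0 - (x0 * y1 - u * (y0 * x1) + v * (y0 * x1))) * z1) -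
      (u * (w0 * v - v * w0) * y0 * x1 * z1) -
      ((u * v - 1) * w0 * y0 * x1 * z1) -
      (w0 * (y0 * x1 - x1 * y0) * z1) +
      (u * (w0 * u - u * w0) * y0 * x1 * z1) +
      (u * u * w0 * (y0 * x1 - x1 * y0) * z1) +
      (u * w1 * (x0 * u - u * x0) * y1 * z0) +
      (u * (w1 * u - u * w1) * x0 * y1 * z0) -
      (w0 * (x1 * u - u * x1) * y1 * z0) -
      ((w0 * u - u * w0) * x1 * y1 * z0) := by
    noncomm_ring
  rw [zuv, zcu w0, zcu w1, zcu x0, zcu x1, zcu y0, zcu y1, zcu z0, zcu z1,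
      zcv w0, zcv w1, zcv x0, zcv x1,
      zcxy0, zcxy1, zcxz0, zcxz1, zcyz0, zcyz1,
      zrxy, zrxz, zryz, zdxy, zdxz, zdyz] at cert
  simpa using cert

/-- in M_q(4|1), the quantum Plücker relations
D₁₂D₃₄ − q⁻¹D₁₃D₂₄ + q⁻²D₁₄D₂₃ = 0 and, for 1 ≤ i < j < k ≤ 4,
D_{ij}D_{k5} − q⁻¹D_{ik}D_{j5} + q⁻²D_{i5}D_{jk} = 0. -/
theorem quantum_plucker_relations {R : Type} [Ring R] (q : Rˣ)
    (a : Fin 5 → Fin 5 → R) (h : IsManin P41 q a) :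
    (Dmin q a 0 1 * Dmin q a 2 3 - (↑q⁻¹ : R) * (Dmin q a 0 2 * Dmin q a 1 3)
        + (↑q⁻¹ : R) ^ 2 * (Dmin q a 0 3 * Dmin q a 1 2) = 0) ∧
    (∀ i j k : Fin 5, i < j → j < k → k ≠ 4 →
      Dmin q a i j * Dmin q a k 4 - (↑q⁻¹ : R) * (Dmin q a i k * Dmin q a j 4)
        + (↑q⁻¹ : R) ^ 2 * (Dmin q a i 4 * Dmin q a j k) = 0) := by
  have hu : ∀ t : R, (↑q⁻¹ : R) * t = t * ↑q⁻¹ := fun t => ((h.central t).units_inv_left).eq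
  have hv : ∀ t : R, (↑q : R) * t = t * ↑q := fun t => (h.central t).eq
  have huv : (↑q⁻¹ : R) * ↑q = 1 := q.inv_mul
  have hne : ∀ r s : Fin 5, r < s → (r == (4 : Fin 5)) = false := by
    intro r s hrs
    have h1 : r.val < s.val := hrs
    have h2 : s.val < 5 := s.isLt
    simp only [beq_eq_false_iff_ne, ne_eq]
    intro he
    rw [he] at h1
    simp at h1
    omega
  have hcol : ∀ r s c : Fin 5, r < s → P41 c = false →
      a s c * a r c = ↑q * (a r c * a s c) := by
    intro r s c hrs hc
    have hc' : (c == (4 : Fin 5)) = false := by simpa [P41] using hc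
    have e := h.col r s c hrs
    simp only [msgn, P41, hne r s hrs, hc', bne_self_eq_false, Bool.false_and, Bool.false_bne,
      Bool.bne_false, if_false, Bool.false_eq_true, ↓reduceIte, one_mul] at e
    rw [e, ← mul_assoc, Units.mul_inv, one_mul]
  have hcross : ∀ r s : Fin 5, r < s → a s 0 * a r 1 = a r 1 * a s 0 := by
    intro r s hrs
    have e := h.cross r 1 s 0 hrs (by decide)
    simp only [msgn, P41, hne r s hrs, show ((0:Fin 5) == 4) = false from rfl,
      show ((1:Fin 5) == 4) = false from rfl, Bool.false_bne, Bool.bne_false, Bool.false_and,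
      Bool.false_eq_true, ↓reduceIte, one_mul] at e
    exact e.symm
  have hdiag : ∀ r s : Fin 5, r < s →
      a s 1 * a r 0 = a r 0 * a s 1 - ↑q⁻¹ * (a s 0 * a r 1) + ↑q * (a s 0 * a r 1) := by
    intro r s hrs
    have e := h.diag r 0 s 1 hrs (by decide)
    simp only [msgn, P41, hne r s hrs, show ((0:Fin 5) == 4) = false from rfl,
      show ((1:Fin 5) == 4) = false from rfl, Bool.false_bne, Bool.bne_false, Bool.false_and,
      Bool.false_eq_true, ↓reduceIte, one_mul] at e
    have e2 : a s 1 * a r 0 = a r 0 * a s 1 - (↑q⁻¹ - ↑q) * (a s 0 * a r 1) := by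
      rw [← e]; noncomm_ring
    rw [e2]; noncomm_ring
  have hP0 : P41 0 = false := by decide
  have hP1 : P41 1 = false := by decide
  have key : ∀ w x y z : Fin 5, w < x → x < y → y < z →
      Dmin q a w x * Dmin q a y z - (↑q⁻¹ : R) * (Dmin q a w y * Dmin q a x z)
        + (↑q⁻¹ : R) ^ 2 * (Dmin q a w z * Dmin q a x y) = 0 := by
    intro w x y z hwx hxy hyz
    simp only [Dmin]
    exact plk_cert (↑q⁻¹ : R) (↑q : R) (a w 0) (a w 1) (a x 0) (a x 1) (a y 0) (a y 1)
      (a z 0) (a z 1) hu hv huv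
      (hcol x y 0 hxy hP0) (hcol x y 1 hxy hP1)
      (hcol x z 0 (hxy.trans hyz) hP0) (hcol x z 1 (hxy.trans hyz) hP1)
      (hcol y z 0 hyz hP0) (hcol y z 1 hyz hP1)
      (hcross x y hxy) (hcross x z (hxy.trans hyz)) (hcross y z hyz)
      (hdiag x y hxy) (hdiag x z (hxy.trans hyz)) (hdiag y z hyz)
  constructor
  · exact key 0 1 2 3 (by decide) (by decide) (by decide)
  · intro i j k hij hjk hk4
    have hk : k < 4 := by
      have h1 : k.val < 5 := k.isLt
      have h2 : k.val ≠ 4 := fun he => hk4 (Fin.ext (by simpa using he))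
      exact Fin.lt_def.mpr (by simp; omega)
    exact key i j k 4 hij hjk hk
end

section
/- Specializing q = 1, the relations defining the quantum super Grassmannian Gr_q become the classical super Plücker relations and commutativity: the quotient Gr_q/(q − 1) is a commutative superalgebra, the commutation relations D_{ij}D_{kl} = q^{±1 or ±2}D_{kl}D_{ij} (and the mixed relations) all reduce to supercommutativity (with D_{i5} odd and the rest even), and the quantum Plücker relations D₁₂D₃₄ − q⁻¹D₁₃D₂₄ + q⁻²D₁₄D₂₃ = 0, D_{ij}D_{k5} − q⁻¹D_{ik}D_{j5} + q⁻²D_{i5}D_{jk} = 0, D_{i5}D_{j5} = qD_{ij}D₅₅ reduce to the classical super Plücker relations q₁₂q₃₄ − q₁₃q₂₄ + q₁₄q₂₃ = 0, q_{ij}λ_k − q_{ik}λ_j + q_{jk}λ_i = 0, λ_iλ_j = a₅₅q_{ij}. -/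
noncomputable section

open LaurentPolynomial

/-- The ground ring ℂ[q,q⁻¹]. -/
abbrev kq : Type := LaurentPolynomial ℂ

/-- q as a unit of ℂ[q,q⁻¹]. -/
def qu : kqˣ := (LaurentPolynomial.isUnit_T (R := ℂ) 1).unit

/-- q as an element of ℂ[q,q⁻¹]. -/
def qc : kq := (qu : kq)

/-- q⁻¹ as an element of ℂ[q,q⁻¹]. -/
def qi : kq := ((qu⁻¹ : kqˣ) : kq)

/-- Index set for the generators X_{ij} (pairs i<j of Fin 5) and X₅₅ (Unit);
the pair (i,5) (i.e. second index `4 : Fin 5`) is odd, all others even. -/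
abbrev GIdx : Type := {p : Fin 5 × Fin 5 // p.1 < p.2} ⊕ Unit

/-- Free ℂ[q,q⁻¹]-algebra on the Grassmannian generators. -/
abbrev FG : Type := FreeAlgebra kq GIdx

/-- The generator X_{ij} (zero if not i<j, a harmless convention). -/
def X (i j : Fin 5) : FG :=
  if h : i < j then FreeAlgebra.ι kq (Sum.inl ⟨(i, j), h⟩) else 0

/-- The generator X₅₅. -/
def X5 : FG := FreeAlgebra.ι kq (Sum.inr ())

/-- The defining relations of the quantum super Grassmannian Gr_q: the
commutation relations and the quantum super Plücker relations. -/
inductive GRel : FG → FG → Prop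
  | c1 (i j k l : Fin 5) : i < j → k < l → (i < k ∨ (i = k ∧ j < l)) →
      (i = k ∨ i = l ∨ j = k ∨ j = l) → ¬(j = 4 ∧ l = 4) →
      GRel (X i j * X k l) (qi • (X k l * X i j))
  | c2 (i j k l : Fin 5) : i < j → j < k → k < l →
      GRel (X i j * X k l) ((qi * qi) • (X k l * X i j))
  | c3 (i j k l : Fin 5) : i < k → k < j → j < l →
      GRel (X i j * X k l) ((qi * qi) • (X k l * X i j) - (qi - qc) • (X i k * X j l))
  | c4 (i j k l : Fin 5) : i < k → k < l → l < j →
      GRel (X i j * X k l) (X k l * X i j)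
  | c5 (i j : Fin 5) : i < j → j ≠ 4 →
      GRel (X i j * X5) ((qi * qi) • (X5 * X i j))
  | c6 (i j : Fin 5) : i < j → j ≠ 4 →
      GRel (X i 4 * X j 4) (-(qc • (X j 4 * X i 4)))
  | c6sq (i : Fin 5) : i ≠ 4 → GRel (X i 4 * X i 4) 0
  | c7a (i : Fin 5) : i ≠ 4 → GRel (X i 4 * X5) 0
  | c7b (i : Fin 5) : i ≠ 4 → GRel (X5 * X i 4) 0
  | p1 : GRel (X 0 1 * X 2 3 - qi • (X 0 2 * X 1 3) + (qi * qi) • (X 0 3 * X 1 2)) 0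
  | p2 (i j k : Fin 5) : i < j → j < k → k ≠ 4 →
      GRel (X i j * X k 4 - qi • (X i k * X j 4) + (qi * qi) • (X i 4 * X j k)) 0
  | p3 (i j : Fin 5) : i < j → j ≠ 4 →
      GRel (X i 4 * X j 4) (qc • (X i j * X5))

/-- The relations of Gr_q together with the specialization q = 1. -/
def GRel1 : FG → FG → Prop := fun x y =>
  GRel x y ∨ (x = algebraMap kq FG (LaurentPolynomial.T 1) ∧ y = 1)

/-- The quotient Gr_q/(q−1). -/
abbrev GrqAtOne : Type := RingQuot GRel1

/-- Free ℂ-algebra on the same generators, for the classical super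
Grassmannian ring. -/
abbrev FC : Type := FreeAlgebra ℂ GIdx

/-- The classical generator q_{ij} resp. λ_i (for j = 5). -/
def Y (i j : Fin 5) : FC :=
  if h : i < j then FreeAlgebra.ι ℂ (Sum.inl ⟨(i, j), h⟩) else 0

/-- The classical generator a₅₅. -/
def Y5 : FC := FreeAlgebra.ι ℂ (Sum.inr ())

/-- The defining relations of the classical super Grassmannian ring O(Gr):
supercommutativity (the λ_i = Y i 4 are odd, the rest even) together with the
classical super Plücker relations. -/
inductive CRel : FC → FC → Prop
  | comm (i j k l : Fin 5) : i < j → k < l → ¬(j = 4 ∧ l = 4) →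
      CRel (Y i j * Y k l) (Y k l * Y i j)
  | comm5 (i j : Fin 5) : i < j → CRel (Y i j * Y5) (Y5 * Y i j)
  | acomm (i j : Fin 5) : i ≠ 4 → j ≠ 4 →
      CRel (Y i 4 * Y j 4) (-(Y j 4 * Y i 4))
  | oddsq (i : Fin 5) : i ≠ 4 → CRel (Y i 4 * Y i 4) 0
  | p1 : CRel (Y 0 1 * Y 2 3 - Y 0 2 * Y 1 3 + Y 0 3 * Y 1 2) 0
  | p2 (i j k : Fin 5) : i < j → j < k → k ≠ 4 →
      CRel (Y i j * Y k 4 - Y i k * Y j 4 + Y j k * Y i 4) 0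
  | p3 (i j : Fin 5) : i < j → j ≠ 4 → CRel (Y i 4 * Y j 4) (Y5 * Y i j)
  | p4 (i : Fin 5) : i ≠ 4 → CRel (Y i 4 * Y5) 0

/-- The classical super Grassmannian ring O(Gr). -/
abbrev OGr : Type := RingQuot CRel

/-- The projection Gr_q → Gr_q/(q−1). -/
def φ : FG →+* GrqAtOne := RingQuot.mkRingHom GRel1

/-! In `Gr_q/(q−1)` the scalar `q` acts as `1`, so its `ℂ[q,q⁻¹]`-structure factors through
evaluation at `q = 1`. Hence every power of `q` in the commutation and Plücker relations becomes
`1` and the correction term `(q⁻¹ − q) X_{ik} X_{jl}` vanishes: each quantum relation turns into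
a classical one, and conversely the classical relations hold among the images of the generators.
The assignments `X_{ij} ↦ q_{ij}, λ_i, a₅₅` and back therefore descend to mutually inverse
algebra maps between the two quotients. -/

namespace LaurentPolynomial

variable {R A : Type*} [CommSemiring R] [Semiring A] [Algebra R A] [Algebra R[T;T⁻¹] A]
  [IsScalarTower R R[T;T⁻¹] A]

theorem algebraMap_eq_of_algebraMap_T_one (h : algebraMap R[T;T⁻¹] A (T 1) = 1)
    (f : R[T;T⁻¹]) :
    algebraMap R[T;T⁻¹] A f = algebraMap R A (eval₂ (RingHom.id R) 1 f) := by
  suffices algebraMap R[T;T⁻¹] A = (algebraMap R A).comp (eval₂ (RingHom.id R) 1) from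
    RingHom.congr_fun this f
  refine IsLocalization.ringHom_ext (Submonoid.powers (Polynomial.X : Polynomial R)) <|
    Polynomial.ringHom_ext (fun r => ?_) ?_
  · simp only [RingHom.comp_apply, algebraMap_eq_toLaurent, Polynomial.toLaurent_C, eval₂_C,
      RingHom.id_apply]
    rw [C_eq_algebraMap, ← IsScalarTower.algebraMap_apply]
  · simp [h]

end LaurentPolynomial

def evalAtOne : kq →+* ℂ := eval₂ (RingHom.id ℂ) 1

@[simp]
theorem evalAtOne_qc : evalAtOne qc = 1 := by
  rw [qc, qu, IsUnit.unit_spec, evalAtOne, eval₂_T, one_zpow, Units.val_one]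

theorem qi_mul_qc : qi * qc = 1 := by
  rw [qi, qc, ← Units.val_mul, inv_mul_cancel, Units.val_one]

@[simp]
theorem evalAtOne_qi : evalAtOne qi = 1 := by
  simpa using congrArg evalAtOne qi_mul_qc

theorem algebraMap_T_one_grqAtOne : algebraMap kq GrqAtOne (T 1) = 1 := by
  simpa using RingQuot.mkAlgHom_rel kq (s := GRel1) (Or.inr ⟨rfl, rfl⟩)

theorem φ_eq_mkAlgHom (x : FG) : φ x = RingQuot.mkAlgHom kq GRel1 x :=
  (RingHom.congr_fun (RingQuot.mkAlgHom_coe kq GRel1) x).symm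

@[simp]
theorem φ_smul (a : kq) (x : FG) : φ (a • x) = evalAtOne a • φ x := by
  rw [φ_eq_mkAlgHom, φ_eq_mkAlgHom, map_smul, Algebra.smul_def, Algebra.smul_def,
    algebraMap_eq_of_algebraMap_T_one algebraMap_T_one_grqAtOne, evalAtOne]

theorem φ_rel {x y : FG} (h : GRel x y) : φ x = φ y := RingQuot.mkRingHom_rel (Or.inl h)

theorem commute_φ_X_of_lex {i j k l : Fin 5} (hij : i < j) (hkl : k < l)
    (hlex : i < k ∨ (i = k ∧ j < l)) (h4 : ¬(j = 4 ∧ l = 4)) :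
    Commute (φ (X i j)) (φ (X k l)) := by
  rw [commute_iff_eq]
  by_cases hshared : i = k ∨ i = l ∨ j = k ∨ j = l
  · simpa using φ_rel (GRel.c1 i j k l hij hkl hlex hshared h4)
  push Not at hshared
  obtain ⟨hik, -, hjk, hjl⟩ := hshared
  replace hik : i < k := hlex.resolve_right fun h => hik h.1
  rcases hjk.lt_or_gt with hjk | hkj
  · simpa using φ_rel (GRel.c2 i j k l hij hjk hkl)
  rcases hjl.lt_or_gt with hjl | hlj
  · have h := φ_rel (GRel.c3 i j k l hik hkj hjl)
    simp only [map_sub, map_mul, φ_smul, evalAtOne_qi, evalAtOne_qc, mul_one, sub_self, one_smul,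
      zero_smul] at h
    -- `RingQuot` has its own `Sub`, `Neg` and `Zero` instances, which `simp` does not see through
    exact h.trans (sub_zero (_ : GrqAtOne))
  · simpa using φ_rel (GRel.c4 i j k l hik hkl hlj)

theorem commute_φ_X {i j k l : Fin 5} (hij : i < j) (hkl : k < l) (h4 : ¬(j = 4 ∧ l = 4)) :
    Commute (φ (X i j)) (φ (X k l)) := by
  have h4' : ¬(l = 4 ∧ j = 4) := fun h => h4 h.symm
  rcases lt_trichotomy i k with hik | rfl | hki
  · exact commute_φ_X_of_lex hij hkl (.inl hik) h4
  · rcases lt_trichotomy j l with hjl | rfl | hlj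
    · exact commute_φ_X_of_lex hij hkl (.inr ⟨rfl, hjl⟩) h4
    · exact .refl _
    · exact (commute_φ_X_of_lex hkl hij (.inr ⟨rfl, hlj⟩) h4').symm
  · exact (commute_φ_X_of_lex hkl hij (.inl hki) h4').symm

theorem φ_X_odd_mul_X5 {i : Fin 5} (hi : i ≠ 4) : φ (X i 4) * φ X5 = 0 := by
  simpa using φ_rel (GRel.c7a i hi)

theorem commute_φ_X_φ_X5 {i j : Fin 5} (hij : i < j) : Commute (φ (X i j)) (φ X5) := by
  by_cases hj : j = 4
  · subst hj
    have hX5_mul : φ X5 * φ (X i 4) = 0 := by simpa using φ_rel (GRel.c7b i (by omega))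
    rw [commute_iff_eq, φ_X_odd_mul_X5 (by omega), hX5_mul]
  · exact (commute_iff_eq _ _).2 (by simpa using φ_rel (GRel.c5 i j hij hj))

theorem φ_X_odd_mul_self {i : Fin 5} (hi : i ≠ 4) : φ (X i 4) * φ (X i 4) = 0 := by
  simpa using φ_rel (GRel.c6sq i hi)

theorem φ_X_odd_anticomm {i j : Fin 5} (hi : i ≠ 4) (hj : j ≠ 4) :
    φ (X i 4) * φ (X j 4) = -(φ (X j 4) * φ (X i 4)) := by
  rcases lt_trichotomy i j with hij | rfl | hji
  · simpa using φ_rel (GRel.c6 i j hij hj)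
  · rw [φ_X_odd_mul_self hi]
    exact (@neg_zero GrqAtOne _).symm
  · have hji_anticomm : φ (X j 4) * φ (X i 4) = -(φ (X i 4) * φ (X j 4)) := by
      simpa using φ_rel (GRel.c6 j i hji hi)
    rw [hji_anticomm]
    exact (neg_neg (_ : GrqAtOne)).symm

theorem φ_plucker :
    φ (X 0 1) * φ (X 2 3) - φ (X 0 2) * φ (X 1 3) + φ (X 0 3) * φ (X 1 2) = 0 := by
  simpa using φ_rel GRel.p1

theorem φ_plucker_odd {i j k : Fin 5} (hij : i < j) (hjk : j < k) (hk : k ≠ 4) :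
    φ (X i j) * φ (X k 4) - φ (X i k) * φ (X j 4) + φ (X j k) * φ (X i 4) = 0 := by
  rw [← (commute_φ_X (by omega : i < 4) hjk fun h => hk h.2).eq]
  simpa using φ_rel (GRel.p2 i j k hij hjk hk)

theorem φ_X_odd_mul_X_odd {i j : Fin 5} (hij : i < j) (hj : j ≠ 4) :
    φ (X i 4) * φ (X j 4) = φ X5 * φ (X i j) := by
  rw [← (commute_φ_X_φ_X5 hij).eq]
  simpa using φ_rel (GRel.p3 i j hij hj)

def ψ : FC →ₐ[ℂ] OGr := RingQuot.mkAlgHom ℂ CRel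

theorem ψ_rel {x y : FC} (h : CRel x y) : ψ x = ψ y := RingQuot.mkAlgHom_rel ℂ h

instance : Algebra kq OGr := Algebra.compHom OGr evalAtOne

instance : IsScalarTower ℂ kq OGr :=
  IsScalarTower.of_algebraMap_eq fun c => by
    change _ = algebraMap ℂ OGr (eval₂ (RingHom.id ℂ) 1 (algebraMap ℂ kq c))
    rw [← C_eq_algebraMap, eval₂_C, RingHom.id_apply]

@[simp]
theorem smul_eq_evalAtOne_smul (a : kq) (y : OGr) : a • y = evalAtOne a • y := rfl

def toOGrFree : FG →ₐ[kq] OGr := FreeAlgebra.lift kq fun g => ψ (FreeAlgebra.ι ℂ g)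

@[simp]
theorem toOGrFree_X (i j : Fin 5) : toOGrFree (X i j) = ψ (Y i j) := by
  unfold X Y
  split_ifs <;> simp [toOGrFree]

@[simp]
theorem toOGrFree_X5 : toOGrFree X5 = ψ Y5 := FreeAlgebra.lift_ι_apply _ _

theorem toOGrFree_rel ⦃x y : FG⦄ (h : GRel1 x y) : toOGrFree x = toOGrFree y := by
  obtain h | ⟨rfl, rfl⟩ := h
  · cases h with
    | c1 i j k l hij hkl _ _ h4 => simpa using ψ_rel (CRel.comm i j k l hij hkl h4)
    | c2 i j k l hij hjk hkl => simpa using ψ_rel (CRel.comm i j k l hij hkl (by omega))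
    | c3 i j k l hik hkj hjl =>
        have h := ψ_rel (CRel.comm i j k l (hik.trans hkj) (hkj.trans hjl) (by omega))
        simp only [map_sub, map_mul, map_smul, smul_eq_evalAtOne_smul, toOGrFree_X, evalAtOne_qi,
          evalAtOne_qc, mul_one, sub_self, one_smul, zero_smul] at h ⊢
        exact h.trans (sub_zero (_ : OGr)).symm
    | c4 i j k l hik hkl hlj =>
        simpa using ψ_rel (CRel.comm i j k l (hik.trans (hkl.trans hlj)) hkl (by omega))
    | c5 i j hij _ => simpa using ψ_rel (CRel.comm5 i j hij)
    | c6 i j hij hj => simpa using ψ_rel (CRel.acomm i j (by omega) hj)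
    | c6sq i hi => simpa using ψ_rel (CRel.oddsq i hi)
    | c7a i hi => simpa using ψ_rel (CRel.p4 i hi)
    | c7b i hi =>
        rw [map_mul, toOGrFree_X5, toOGrFree_X, ← map_mul, ← ψ_rel (CRel.comm5 i 4 (by omega)),
          ψ_rel (CRel.p4 i hi), map_zero, map_zero]
    | p1 => simpa using ψ_rel CRel.p1
    | p2 i j k hij hjk hk =>
        have hcomm := ψ_rel (CRel.comm i 4 j k (by omega) hjk (by omega))
        rw [map_mul, map_mul] at hcomm
        simpa [hcomm] using ψ_rel (CRel.p2 i j k hij hjk hk)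
    | p3 i j hij hj =>
        have hcomm := ψ_rel (CRel.comm5 i j hij)
        rw [map_mul, map_mul] at hcomm
        simpa [hcomm] using ψ_rel (CRel.p3 i j hij hj)
  · simp [Algebra.compHom_algebraMap_apply, evalAtOne]

def ofOGrFree : FC →ₐ[ℂ] GrqAtOne := FreeAlgebra.lift ℂ fun g => φ (FreeAlgebra.ι kq g)

@[simp]
theorem ofOGrFree_Y (i j : Fin 5) : ofOGrFree (Y i j) = φ (X i j) := by
  unfold X Y
  split_ifs <;> simp [ofOGrFree]

@[simp]
theorem ofOGrFree_Y5 : ofOGrFree Y5 = φ X5 := FreeAlgebra.lift_ι_apply _ _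

theorem ofOGrFree_rel ⦃x y : FC⦄ (h : CRel x y) : ofOGrFree x = ofOGrFree y := by
  cases h with
  | comm i j k l hij hkl h4 => simpa using (commute_φ_X hij hkl h4).eq
  | comm5 i j hij => simpa using (commute_φ_X_φ_X5 hij).eq
  | acomm i j hi hj => simpa using φ_X_odd_anticomm hi hj
  | oddsq i hi => simpa using φ_X_odd_mul_self hi
  | p1 => simpa using φ_plucker
  | p2 i j k hij hjk hk => simpa using φ_plucker_odd hij hjk hk
  | p3 i j hij hj => simpa using φ_X_odd_mul_X_odd hij hj
  | p4 i hi => simpa using φ_X_odd_mul_X5 hi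

def toOGr : GrqAtOne →ₐ[kq] OGr := RingQuot.liftAlgHom kq ⟨toOGrFree, toOGrFree_rel⟩

def ofOGr : OGr →ₐ[kq] GrqAtOne :=
  let f := RingQuot.liftAlgHom ℂ ⟨ofOGrFree, ofOGrFree_rel⟩
  { f with
    commutes' := fun a => (f.commutes (evalAtOne a)).trans
      (algebraMap_eq_of_algebraMap_T_one algebraMap_T_one_grqAtOne a).symm }

@[simp]
theorem toOGr_φ (x : FG) : toOGr (φ x) = toOGrFree x := by
  rw [φ_eq_mkAlgHom]
  exact RingQuot.liftAlgHom_mkAlgHom_apply kq _ _ x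

@[simp]
theorem ofOGr_ψ (x : FC) : ofOGr (ψ x) = ofOGrFree x :=
  RingQuot.liftAlgHom_mkAlgHom_apply ℂ _ _ x

def grqAtOneEquivOGr : GrqAtOne ≃ₐ[kq] OGr :=
  AlgEquiv.ofAlgHom toOGr ofOGr
    (AlgHom.restrictScalars_injective ℂ <| RingQuot.ringQuot_ext' _ _ _ <|
      FreeAlgebra.hom_ext <| funext fun g => by
        simp [← ψ.eq_def, ofOGrFree, toOGrFree])
    (RingQuot.ringQuot_ext' _ _ _ <| FreeAlgebra.hom_ext <| funext fun g => by
      simp [← φ_eq_mkAlgHom, ofOGrFree, toOGrFree])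

/-- specializing q = 1, the quantum super Grassmannian becomes
the classical one: Gr_q/(q−1) ≅ O(Gr) as rings, and in Gr_q/(q−1) the images
of the generators supercommute (D_{i5} odd, the rest even) and satisfy the
classical super Plücker relations. -/
theorem quantum_grassmannian_at_q_one :
    Nonempty (GrqAtOne ≃+* OGr) ∧
    (∀ i j k l : Fin 5, i < j → k < l → ¬(j = 4 ∧ l = 4) →
      Commute (φ (X i j)) (φ (X k l))) ∧
    (∀ i j : Fin 5, i < j → Commute (φ (X i j)) (φ X5)) ∧
    (∀ i j : Fin 5, i ≠ 4 → j ≠ 4 →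
      φ (X i 4) * φ (X j 4) = -(φ (X j 4) * φ (X i 4))) ∧
    (φ (X 0 1) * φ (X 2 3) - φ (X 0 2) * φ (X 1 3) + φ (X 0 3) * φ (X 1 2) = 0) ∧
    (∀ i j k : Fin 5, i < j → j < k → k ≠ 4 →
      φ (X i j) * φ (X k 4) - φ (X i k) * φ (X j 4) + φ (X j k) * φ (X i 4) = 0) ∧
    (∀ i j : Fin 5, i < j → j ≠ 4 →
      φ (X i 4) * φ (X j 4) = φ X5 * φ (X i j)) :=
  ⟨⟨grqAtOneEquivOGr.toRingEquiv⟩, fun _ _ _ _ => commute_φ_X, fun _ _ => commute_φ_X_φ_X5,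
    fun _ _ => φ_X_odd_anticomm, φ_plucker, fun _ _ _ => φ_plucker_odd,
    fun _ _ => φ_X_odd_mul_X_odd⟩

end
end
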